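/- arXiv:2310.20013 — 2 statements merged into one kernel-verified Lean document; each statement's English description precedes it below -/
import Mathlib

section
/- Let m > 1 and let f : ℝ → ℝ be continuous with f(s)/(|s|^{m−2}s) → +∞ as s → +∞ and as s → −∞. Define F(s) = ∫₀^s f(t) dt. Then F is bounded below: there exists M ≥ 0 such that F(s) ≥ −M for all s ∈ ℝ. -/
/-!
Dividing by `|s| ^ (m - 2) * s`, whose sign is that of `s`, the growth hypotheses force `f > 0`
on some `[A, ∞)` and `f < 0` on some `(-∞, B]`. So the primitive `F` increases on `[A, ∞)` and
decreases on `(-∞, B]`, and its minimum over the compact interval between them is a global one.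
-/

open Filter Topology Set

lemma Filter.Tendsto.eventually_pos_of_div_atTop {α : Type*} {l : Filter α} {f g : α → ℝ}
    (h : Tendsto (fun x => f x / g x) l atTop) (hg : ∀ᶠ x in l, 0 < g x) :
    ∀ᶠ x in l, 0 < f x := by
  filter_upwards [h.eventually_gt_atTop 0, hg] with x hfg hgx
  simpa [div_mul_cancel₀ _ hgx.ne'] using mul_pos hfg hgx

lemma Filter.Tendsto.eventually_neg_of_div_atTop {α : Type*} {l : Filter α} {f g : α → ℝ}
    (h : Tendsto (fun x => f x / g x) l atTop) (hg : ∀ᶠ x in l, g x < 0) :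
    ∀ᶠ x in l, f x < 0 := by
  filter_upwards [h.eventually_gt_atTop 0, hg] with x hfg hgx
  simpa [div_mul_cancel₀ _ hgx.ne] using mul_neg_of_pos_of_neg hfg hgx

lemma abs_rpow_mul_self_pos {s : ℝ} (hs : 0 < s) (p : ℝ) : 0 < |s| ^ p * s :=
  mul_pos (Real.rpow_pos_of_pos (abs_pos.2 hs.ne') p) hs

lemma abs_rpow_mul_self_neg {s : ℝ} (hs : s < 0) (p : ℝ) : |s| ^ p * s < 0 :=
  mul_neg_of_pos_of_neg (Real.rpow_pos_of_pos (abs_pos.2 hs.ne) p) hs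

section Primitive

variable {f : ℝ → ℝ} (hf : Continuous f) (a : ℝ)
include hf

lemma Continuous.differentiable_primitive : Differentiable ℝ (fun u => ∫ t in a..u, f t) :=
  fun x => (hf.integral_hasStrictDerivAt a x).hasDerivAt.differentiableAt

variable {D : Set ℝ} (hD : Convex ℝ D)
include hD

lemma Continuous.monotoneOn_primitive (hpos : ∀ x ∈ interior D, 0 ≤ f x) :
    MonotoneOn (fun u => ∫ t in a..u, f t) D :=
  monotoneOn_of_deriv_nonneg hD (hf.differentiable_primitive a).continuous.continuousOn
    (hf.differentiable_primitive a).differentiableOn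
    fun x hx => (hf.deriv_integral f a x).symm ▸ hpos x hx

lemma Continuous.antitoneOn_primitive (hneg : ∀ x ∈ interior D, f x ≤ 0) :
    AntitoneOn (fun u => ∫ t in a..u, f t) D :=
  antitoneOn_of_deriv_nonpos hD (hf.differentiable_primitive a).continuous.continuousOn
    (hf.differentiable_primitive a).differentiableOn
    fun x hx => (hf.deriv_integral f a x).symm ▸ hneg x hx

end Primitive

lemma Continuous.exists_forall_le_of_antitoneOn_Iic_of_monotoneOn_Ici {α β : Type*}
    [ConditionallyCompleteLinearOrder α] [TopologicalSpace α] [OrderTopology α]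
    [LinearOrder β] [TopologicalSpace β] [OrderClosedTopology β] {F : α → β}
    (hF : Continuous F) {A B : α} (hB : AntitoneOn F (Iic B)) (hA : MonotoneOn F (Ici A)) :
    ∃ x, ∀ y, F x ≤ F y := by
  obtain ⟨x, -, hx⟩ := isCompact_Icc.exists_isMinOn (nonempty_Icc.2 (min_le_right B A))
    hF.continuousOn
  refine ⟨x, fun y => ?_⟩
  rcases le_total y (min B A) with hyB | hyB
  · have hBA : min B A ∈ Icc (min B A) A := ⟨le_rfl, min_le_right B A⟩
    exact (hx hBA).trans (hB (hyB.trans (min_le_left B A)) (min_le_left B A) hyB)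
  rcases le_total y A with hyA | hyA
  · exact hx ⟨hyB, hyA⟩
  · exact (hx ⟨min_le_right B A, le_rfl⟩).trans (hA le_rfl hyA hyA)

theorem statement14_general (m : ℝ) (f : ℝ → ℝ) (hf : Continuous f)
    (htop : Tendsto (fun s : ℝ => f s / (|s| ^ (m - 2) * s)) atTop atTop)
    (hbot : Tendsto (fun s : ℝ => f s / (|s| ^ (m - 2) * s)) atBot atTop)
    (F : ℝ → ℝ) (hF : ∀ s : ℝ, F s = ∫ t in (0:ℝ)..s, f t) :
    ∃ M : ℝ, 0 ≤ M ∧ ∀ s : ℝ, -M ≤ F s := by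
  obtain ⟨A, hA⟩ := eventually_atTop.1 <| htop.eventually_pos_of_div_atTop <|
    (eventually_gt_atTop 0).mono fun s hs => abs_rpow_mul_self_pos hs (m - 2)
  obtain ⟨B, hB⟩ := eventually_atBot.1 <| hbot.eventually_neg_of_div_atTop <|
    (eventually_lt_atBot 0).mono fun s hs => abs_rpow_mul_self_neg hs (m - 2)
  obtain rfl : F = fun s => ∫ t in (0:ℝ)..s, f t := funext hF
  have hmono := hf.monotoneOn_primitive 0 (convex_Ici A) fun x hx =>
    (hA x (interior_subset (s := Ici A) hx)).le
  have hanti := hf.antitoneOn_primitive 0 (convex_Iic B) fun x hx =>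
    (hB x (interior_subset (s := Iic B) hx)).le
  obtain ⟨x, hx⟩ := (hf.differentiable_primitive 0).continuous
    |>.exists_forall_le_of_antitoneOn_Iic_of_monotoneOn_Ici hanti hmono
  refine ⟨max 0 (-∫ t in (0:ℝ)..x, f t), le_max_left _ _, fun s => ?_⟩
  linarith [hx s, le_max_right 0 (-∫ t in (0:ℝ)..x, f t)]

theorem statement14 (m : ℝ) (hm : 1 < m) (f : ℝ → ℝ) (hf : Continuous f)
    (htop : Tendsto (fun s : ℝ => f s / (|s| ^ (m - 2) * s)) atTop atTop)
    (hbot : Tendsto (fun s : ℝ => f s / (|s| ^ (m - 2) * s)) atBot atTop)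
    (F : ℝ → ℝ) (hF : ∀ s : ℝ, F s = ∫ t in (0:ℝ)..s, f t) :
    ∃ M : ℝ, 0 ≤ M ∧ ∀ s : ℝ, -M ≤ F s :=
  statement14_general m f hf htop hbot F hF
end

section
/- Let m > 1 and let f : ℝ → ℝ be a function such that the map s ↦ f(s)/|s|^{m−1} is strictly increasing on (−∞, 0) and strictly increasing on (0, +∞). Then for every t ∈ (0,1) and every u ∈ ℝ one has f(tu)·u ≤ t^{m−1} f(u)·u. (In the paper this is relation (4.1), where m = qϑ and f satisfies hypothesis (H3)(v).) -/
/-!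
Since `|t u|^(m-1) = t^(m-1) |u|^(m-1)`, comparing the quotient `f s / |s|^(m-1)` at `t u` and at `u`
(which lie on the same half-line) compares `f (t u)` with `t^(m-1) f u`; the sign of `u` flips both
the monotonicity comparison and the multiplication by `u`, so the inequality holds on both sides.
-/

open Set

lemma abs_mul_rpow_of_pos {t : ℝ} (ht : 0 < t) (u p : ℝ) :
    |t * u| ^ p = t ^ p * |u| ^ p := by
  rw [abs_mul, abs_of_pos ht, Real.mul_rpow ht.le (abs_nonneg u)]

lemma div_abs_mul_rpow_lt_div_abs_rpow_iff {t u : ℝ} (ht : 0 < t) (hu : u ≠ 0) (p a b : ℝ) :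
    a / |t * u| ^ p < b / |u| ^ p ↔ a < t ^ p * b := by
  have hup : 0 < |u| ^ p := Real.rpow_pos_of_pos (abs_pos.2 hu) p
  rw [abs_mul_rpow_of_pos ht, div_lt_div_iff₀ (by positivity) hup,
    ← mul_assoc, mul_lt_mul_iff_left₀ hup, mul_comm b]

lemma div_abs_rpow_lt_div_abs_mul_rpow_iff {t u : ℝ} (ht : 0 < t) (hu : u ≠ 0) (p a b : ℝ) :
    b / |u| ^ p < a / |t * u| ^ p ↔ t ^ p * b < a := by
  have hup : 0 < |u| ^ p := Real.rpow_pos_of_pos (abs_pos.2 hu) p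
  rw [abs_mul_rpow_of_pos ht, div_lt_div_iff₀ hup (by positivity),
    ← mul_assoc, mul_lt_mul_iff_left₀ hup, mul_comm b]

theorem statement17_general (m : ℝ) (f : ℝ → ℝ)
    (hneg : StrictMonoOn (fun s : ℝ => f s / |s| ^ (m - 1)) (Iio 0))
    (hpos : StrictMonoOn (fun s : ℝ => f s / |s| ^ (m - 1)) (Ioi 0)) :
    ∀ t ∈ Ioo (0:ℝ) 1, ∀ u : ℝ, f (t * u) * u ≤ t ^ (m - 1) * (f u * u) := by
  rintro t ⟨ht0, ht1⟩ u
  rw [← mul_assoc]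
  rcases lt_trichotomy u 0 with hu | rfl | hu
  · have hratio := hneg hu (mul_neg_of_pos_of_neg ht0 hu) (by nlinarith : u < t * u)
    rw [div_abs_rpow_lt_div_abs_mul_rpow_iff ht0 hu.ne] at hratio
    exact mul_le_mul_of_nonpos_right hratio.le hu.le
  · simp
  · have hratio := hpos (mul_pos ht0 hu) hu (by nlinarith : t * u < u)
    rw [div_abs_mul_rpow_lt_div_abs_rpow_iff ht0 hu.ne'] at hratio
    exact mul_le_mul_of_nonneg_right hratio.le hu.le

theorem statement17 (m : ℝ) (hm : 1 < m) (f : ℝ → ℝ)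
    (hneg : StrictMonoOn (fun s : ℝ => f s / |s| ^ (m - 1)) (Iio 0))
    (hpos : StrictMonoOn (fun s : ℝ => f s / |s| ^ (m - 1)) (Ioi 0)) :
    ∀ t ∈ Ioo (0:ℝ) 1, ∀ u : ℝ, f (t * u) * u ≤ t ^ (m - 1) * (f u * u) :=
  statement17_general m f hneg hpos
end
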